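/- arXiv:0907.0513 — 3 statements merged into one kernel-verified Lean document; each statement's English description precedes it below -/
import Mathlib

section
/- G_1(n) = y_n(1), where y_n is the n-th Bessel polynomial. -/
/-- `E σ n k` is the number of partitions of `{1,…,k}` into exactly `n` blocks,
each of size between `1` and `σ+1`. -/
noncomputable def E (σ n k : ℕ) : ℕ :=
  Nat.card {P : Finpartition (Finset.univ : Finset (Fin k)) //
    P.parts.card = n ∧ ∀ b ∈ P.parts, b.card ≤ σ + 1}

/-- `G₁ n = Σ_{k=n}^{2n} E₁(n,k)`. -/
noncomputable def G1 (n : ℕ) : ℕ := ∑ k ∈ Finset.Icc n (2 * n), E 1 n k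

/-- The Bessel polynomial `y_n(z)`. -/
def bessel (n : ℕ) (z : ℚ) : ℚ :=
  ∑ i ∈ Finset.range (n + 1),
    (Nat.factorial (n + i) : ℚ) * z ^ i /
      ((Nat.factorial (n - i) : ℚ) * (Nat.factorial i : ℚ) * 2 ^ i)

/-!
A partition of a `k`-set into `n` blocks of size at most two has exactly `i = k - n` doubletons.
Listing the doubletons in some order, and the two points of each doubleton in some order, gives an
injection `Fin i × Bool ↪ Fin k`; conversely every such injection determines its partition (its
doubletons are the images of the sets `{j} × Bool`, the other points are singletons) and arises
from exactly `i! * 2 ^ i` listings of it. Hence `E₁(n, n + i) * i! * 2 ^ i = (n + i)! / (n - i)!`,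
which is the `i`-th term of `y_n(1)`.
-/

open Finset
open scoped Nat

lemma Bool.exists_eq_comp_xor {β : Type*} {g h : Bool → β} (hg : Function.Injective g)
    (hgh : ∀ t, ∃ u, g t = h u) : ∃ c, ∀ t, g t = h (t ^^ c) := by
  obtain ⟨u₀, hu₀⟩ := hgh false
  obtain ⟨u₁, hu₁⟩ := hgh true
  have hne : u₀ ≠ u₁ := fun h => Bool.false_ne_true (hg (by rw [hu₀, hu₁, h]))
  refine ⟨u₀, fun t => ?_⟩
  cases t
  · simpa using hu₀
  · rw [hu₁, Bool.true_xor]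
    cases u₀ <;> cases u₁ <;> simp_all

namespace Finpartition

variable {α : Type*} [DecidableEq α] {s : Finset α}

def doubletons (P : Finpartition s) : Finset (Finset α) := P.parts.filter (#· = 2)

lemma doubletons_subset_parts (P : Finpartition s) : P.doubletons ⊆ P.parts :=
  filter_subset _ _

lemma card_parts_add_card_doubletons (P : Finpartition s) (hP : ∀ b ∈ P.parts, #b ≤ 2) :
    #P.parts + #P.doubletons = #s := by
  have hsplit : ∀ b ∈ P.parts, #b = 1 + if #b = 2 then 1 else 0 := fun b hb => by
    have := (P.nonempty_of_mem_parts hb).card_pos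
    have := hP b hb
    split_ifs <;> omega
  rw [← P.sum_card_parts, sum_congr rfl hsplit, sum_add_distrib, sum_boole, doubletons]
  simp

lemma card_eq_one_of_notMem_doubletons {P : Finpartition s} (hP : ∀ b ∈ P.parts, #b ≤ 2)
    {b : Finset α} (hb : b ∈ P.parts) (hbd : b ∉ P.doubletons) : #b = 1 := by
  have := (P.nonempty_of_mem_parts hb).card_pos
  have := hP b hb
  have : #b ≠ 2 := fun h => hbd (mem_filter.2 ⟨hb, h⟩)
  omega

lemma parts_subset_of_doubletons_subset {P Q : Finpartition s}
    (hP : ∀ b ∈ P.parts, #b ≤ 2) (hQ : ∀ b ∈ Q.parts, #b ≤ 2)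
    (h : P.doubletons = Q.doubletons) : P.parts ⊆ Q.parts := by
  intro b hb
  by_cases hbd : b ∈ P.doubletons
  · exact Q.doubletons_subset_parts (h ▸ hbd)
  obtain ⟨x, rfl⟩ := card_eq_one.1 (card_eq_one_of_notMem_doubletons hP hb hbd)
  obtain ⟨c, hc, hxc⟩ := Q.exists_mem (P.le hb (mem_singleton_self x))
  by_cases hcd : c ∈ Q.doubletons
  · have := P.eq_of_mem_parts hb (P.doubletons_subset_parts (h ▸ hcd)) (mem_singleton_self x) hxc
    exact absurd (this ▸ hcd) (h ▸ hbd)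
  obtain ⟨y, rfl⟩ := card_eq_one.1 (card_eq_one_of_notMem_doubletons hQ hc hcd)
  rwa [mem_singleton.1 hxc]

lemma eq_of_doubletons_eq {P Q : Finpartition s}
    (hP : ∀ b ∈ P.parts, #b ≤ 2) (hQ : ∀ b ∈ Q.parts, #b ≤ 2)
    (h : P.doubletons = Q.doubletons) : P = Q :=
  Finpartition.ext <| (parts_subset_of_doubletons_subset hP hQ h).antisymm
    (parts_subset_of_doubletons_subset hQ hP h.symm)

end Finpartition

namespace Function.Embedding

variable {α ι : Type*} [DecidableEq α]

def pair (f : ι × Bool ↪ α) (j : ι) : Finset α := {f (j, false), f (j, true)}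

variable {f : ι × Bool ↪ α} {j j' : ι} {x : α}

lemma mem_pair : x ∈ f.pair j ↔ ∃ t, f (j, t) = x := by
  simp [pair, Bool.exists_bool, eq_comm]

lemma card_pair : #(f.pair j) = 2 :=
  Finset.card_pair fun h => Bool.false_ne_true (congrArg Prod.snd (f.injective h))

lemma eq_of_mem_pair_of_mem_pair (h : x ∈ f.pair j) (h' : x ∈ f.pair j') : j = j' := by
  obtain ⟨t, rfl⟩ := mem_pair.1 h
  obtain ⟨t', ht'⟩ := mem_pair.1 h'
  exact congrArg Prod.fst (f.injective ht').symm

lemma pair_injective : Function.Injective f.pair := fun _ _ h =>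
  eq_of_mem_pair_of_mem_pair (mem_pair.2 ⟨false, rfl⟩) (h ▸ mem_pair.2 ⟨false, rfl⟩)

variable [Fintype α] [Fintype ι]

def pairsAndSingletons (f : ι × Bool ↪ α) : Finset (Finset α) :=
  univ.image f.pair ∪ (univ.map f)ᶜ.image singleton

lemma mem_pairsAndSingletons {b : Finset α} :
    b ∈ f.pairsAndSingletons ↔
      (∃ j, f.pair j = b) ∨ ∃ x, (∀ p, f p ≠ x) ∧ {x} = b := by
  simp [pairsAndSingletons]

lemma existsUnique_mem_pairsAndSingletons (x : α) :
    ∃! b, b ∈ f.pairsAndSingletons ∧ x ∈ b := by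
  by_cases hx : ∃ p, f p = x
  · obtain ⟨⟨j, t⟩, rfl⟩ := hx
    refine ⟨f.pair j, ⟨mem_pairsAndSingletons.2 (.inl ⟨j, rfl⟩), mem_pair.2 ⟨t, rfl⟩⟩,
      ?_⟩
    rintro b ⟨hb, hxb⟩
    rcases mem_pairsAndSingletons.1 hb with ⟨j', rfl⟩ | ⟨y, hy, rfl⟩
    · rw [eq_of_mem_pair_of_mem_pair hxb (mem_pair.2 ⟨t, rfl⟩)]
    · exact absurd (mem_singleton.1 hxb) (hy _)
  · push Not at hx
    refine ⟨{x}, ⟨mem_pairsAndSingletons.2 (.inr ⟨x, hx, rfl⟩), mem_singleton_self x⟩,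
      ?_⟩
    rintro b ⟨hb, hxb⟩
    rcases mem_pairsAndSingletons.1 hb with ⟨j', rfl⟩ | ⟨y, hy, rfl⟩
    · obtain ⟨t, ht⟩ := mem_pair.1 hxb
      exact absurd ht (hx _)
    · rw [mem_singleton.1 hxb]

def toFinpartition (f : ι × Bool ↪ α) : Finpartition (univ : Finset α) :=
  .ofExistsUnique f.pairsAndSingletons (fun _ _ => subset_univ _)
    (fun x _ => existsUnique_mem_pairsAndSingletons x)
    (by simp [pairsAndSingletons, ← card_eq_zero, card_pair])

lemma parts_toFinpartition : f.toFinpartition.parts = f.pairsAndSingletons := rfl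

lemma card_le_two_of_mem_parts_toFinpartition {b : Finset α}
    (hb : b ∈ f.toFinpartition.parts) : #b ≤ 2 := by
  rcases mem_pairsAndSingletons.1 hb with ⟨j, rfl⟩ | ⟨x, -, rfl⟩
  · exact card_pair.le
  · simp

lemma doubletons_toFinpartition : f.toFinpartition.doubletons = univ.image f.pair := by
  rw [Finpartition.doubletons, parts_toFinpartition, pairsAndSingletons, filter_union,
    filter_true_of_mem, filter_false_of_mem, union_empty]
  · simp
  · simp [card_pair]

lemma card_parts_toFinpartition :
    #f.toFinpartition.parts = Fintype.card α - Fintype.card ι := by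
  have := f.toFinpartition.card_parts_add_card_doubletons
    fun _ => card_le_two_of_mem_parts_toFinpartition
  rw [doubletons_toFinpartition, card_image_of_injective _ pair_injective, card_univ,
    card_univ] at this
  omega

end Function.Embedding

namespace Finpartition

variable {α ι : Type*} [Fintype α] [DecidableEq α] (P : Finpartition (univ : Finset α))

noncomputable def doubletonEquiv (b : P.doubletons) : Bool ≃ b.1 :=
  Fintype.equivOfCardEq (by simp [(mem_filter.1 b.2).2])

/-- `σ` lists the doubletons of `P` and `c j` says which end of the `j`-th one comes first. -/
noncomputable def embeddingOfEquiv (σ : ι ≃ P.doubletons) (c : ι → Bool) :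
    ι × Bool ↪ α where
  toFun p := P.doubletonEquiv (σ p.1) (p.2 ^^ c p.1)
  inj' := by
    rintro ⟨j, t⟩ ⟨j', t'⟩ (h : (P.doubletonEquiv (σ j) (t ^^ c j) : α) =
      P.doubletonEquiv (σ j') (t' ^^ c j'))
    have hσ : σ j = σ j' := Subtype.ext <| P.eq_of_mem_parts
      (P.doubletons_subset_parts (σ j).2) (P.doubletons_subset_parts (σ j').2)
      (P.doubletonEquiv (σ j) _).2 (by rw [h]; exact (P.doubletonEquiv (σ j') _).2)
    obtain rfl := σ.injective hσ
    simpa using (P.doubletonEquiv (σ j)).injective (Subtype.ext h)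

variable {P}

lemma embeddingOfEquiv_apply (σ : ι ≃ P.doubletons) (c : ι → Bool) (j : ι) (t : Bool) :
    P.embeddingOfEquiv σ c (j, t) = P.doubletonEquiv (σ j) (t ^^ c j) := rfl

lemma pair_embeddingOfEquiv (σ : ι ≃ P.doubletons) (c : ι → Bool) (j : ι) :
    (P.embeddingOfEquiv σ c).pair j = σ j := by
  refine eq_of_subset_of_card_le (fun x hx => ?_) ?_
  · obtain ⟨t, rfl⟩ := Function.Embedding.mem_pair.1 hx
    exact (P.doubletonEquiv (σ j) _).2
  · rw [Function.Embedding.card_pair, (mem_filter.1 (σ j).2).2]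

lemma toFinpartition_embeddingOfEquiv [Fintype ι] (hP : ∀ b ∈ P.parts, #b ≤ 2)
    (σ : ι ≃ P.doubletons) (c : ι → Bool) :
    (P.embeddingOfEquiv σ c).toFinpartition = P := by
  refine eq_of_doubletons_eq (fun _ => Function.Embedding.card_le_two_of_mem_parts_toFinpartition)
    hP ?_
  ext b
  simp only [Function.Embedding.doubletons_toFinpartition, mem_image, mem_univ, true_and,
    pair_embeddingOfEquiv]
  exact ⟨by rintro ⟨j, rfl⟩; exact (σ j).2, fun hb => ⟨σ.symm ⟨b, hb⟩, by simp⟩⟩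

lemma embeddingOfEquiv_injective :
    Function.Injective fun p : (ι ≃ P.doubletons) × (ι → Bool) =>
      P.embeddingOfEquiv p.1 p.2 := by
  rintro ⟨σ, c⟩ ⟨σ', c'⟩ h
  simp only at h
  obtain rfl : σ = σ' := Equiv.ext fun j => Subtype.ext <| by
    rw [← pair_embeddingOfEquiv σ c, h, pair_embeddingOfEquiv]
  have hc : ∀ j, c j = c' j := fun j => by
    simpa [embeddingOfEquiv_apply] using DFunLike.congr_fun h (j, false)
  rw [funext hc]

lemma exists_embeddingOfEquiv_eq [Fintype ι] (hi : #P.doubletons = Fintype.card ι)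
    (f : ι × Bool ↪ α) (hf : f.toFinpartition = P) :
    ∃ σ c, P.embeddingOfEquiv σ c = f := by
  have hpair : ∀ j, f.pair j ∈ P.doubletons := fun j => by
    rw [← hf, Function.Embedding.doubletons_toFinpartition]
    exact mem_image_of_mem _ (mem_univ j)
  let σ : ι ≃ P.doubletons := Equiv.ofBijective (fun j => ⟨f.pair j, hpair j⟩) <|
    (Fintype.bijective_iff_injective_and_card _).2
      ⟨fun _ _ h => Function.Embedding.pair_injective (congrArg Subtype.val h), by simp [hi]⟩
  have hc : ∀ j, ∃ c, ∀ t, f (j, t) = P.doubletonEquiv (σ j) (t ^^ c) := fun j =>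
    Bool.exists_eq_comp_xor (g := fun t => f (j, t)) (h := fun u => P.doubletonEquiv (σ j) u)
      (fun _ _ h => congrArg Prod.snd (f.injective h)) fun t =>
      let ⟨u, hu⟩ := (P.doubletonEquiv (σ j)).surjective
        ⟨f (j, t), Function.Embedding.mem_pair.2 ⟨t, rfl⟩⟩
      ⟨u, by rw [hu]⟩
  choose c hc using hc
  exact ⟨σ, c, DFunLike.ext _ _ fun ⟨j, t⟩ => (hc j t).symm⟩

lemma card_embeddings_toFinpartition_eq [Fintype ι] [DecidableEq ι]
    (hP : ∀ b ∈ P.parts, #b ≤ 2) (hi : #P.doubletons = Fintype.card ι) :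
    Nat.card {f : ι × Bool ↪ α // f.toFinpartition = P} =
      (Fintype.card ι)! * 2 ^ Fintype.card ι := by
  have hbij : Function.Bijective fun p : (ι ≃ P.doubletons) × (ι → Bool) =>
      (⟨P.embeddingOfEquiv p.1 p.2, toFinpartition_embeddingOfEquiv hP p.1 p.2⟩ :
        {f : ι × Bool ↪ α // f.toFinpartition = P}) := by
    refine ⟨fun _ _ h => embeddingOfEquiv_injective (congrArg Subtype.val h), ?_⟩
    rintro ⟨f, hf⟩
    obtain ⟨σ, c, rfl⟩ := exists_embeddingOfEquiv_eq hi f hf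
    exact ⟨(σ, c), rfl⟩
  have e : ι ≃ P.doubletons := Fintype.equivOfCardEq (by simp [hi])
  rw [← Nat.card_eq_of_bijective _ hbij, Nat.card_eq_fintype_card, Fintype.card_prod,
    Fintype.card_equiv e, Fintype.card_fun, Fintype.card_bool]

end Finpartition

theorem card_finpartitions_card_le_two_mul_eq_descFactorial {α ι : Type*} [Fintype α]
    [DecidableEq α] [Fintype ι] [DecidableEq ι] (h : Fintype.card ι ≤ Fintype.card α) :
    Nat.card {P : Finpartition (univ : Finset α) //
        #P.parts = Fintype.card α - Fintype.card ι ∧ ∀ b ∈ P.parts, #b ≤ 2} *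
      ((Fintype.card ι)! * 2 ^ Fintype.card ι) =
    (Fintype.card α).descFactorial (2 * Fintype.card ι) := by
  classical
  let Φ (f : ι × Bool ↪ α) : {P : Finpartition (univ : Finset α) //
      #P.parts = Fintype.card α - Fintype.card ι ∧ ∀ b ∈ P.parts, #b ≤ 2} :=
    ⟨f.toFinpartition, f.card_parts_toFinpartition,
      fun _ => Function.Embedding.card_le_two_of_mem_parts_toFinpartition⟩
  have hfiber : ∀ P, Nat.card {f // Φ f = P} = (Fintype.card ι)! * 2 ^ Fintype.card ι := by
    rintro ⟨P, hcard, hP⟩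
    have hi : #P.doubletons = Fintype.card ι := by
      have := P.card_parts_add_card_doubletons hP
      rw [card_univ] at this
      omega
    rw [← P.card_embeddings_toFinpartition_eq hP hi]
    exact Nat.card_congr (Equiv.subtypeEquivRight fun f => Subtype.ext_iff)
  calc _ = ∑ P, Nat.card {f // Φ f = P} := by
        rw [sum_congr rfl fun P _ => hfiber P, sum_const, card_univ, smul_eq_mul,
          Nat.card_eq_fintype_card]
    _ = Nat.card (ι × Bool ↪ α) := by
      rw [← Nat.card_sigma, Nat.card_congr (Equiv.sigmaFiberEquiv Φ)]
    _ = _ := by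
      rw [Nat.card_eq_fintype_card, Fintype.card_embedding_eq, Fintype.card_prod,
        Fintype.card_bool, mul_comm]

lemma E_one_add_mul_eq_factorial {n i : ℕ} (h : i ≤ n) :
    E 1 n (n + i) * (i ! * 2 ^ i) * (n - i)! = (n + i)! := by
  have hcount :=
    card_finpartitions_card_le_two_mul_eq_descFactorial (α := Fin (n + i)) (ι := Fin i) (by simp)
  simp only [Fintype.card_fin, Nat.add_sub_cancel] at hcount
  rw [E, hcount, mul_comm, ← Nat.factorial_mul_descFactorial (by omega : 2 * i ≤ n + i),
    show n + i - 2 * i = n - i by omega]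

theorem stmt_8 (n : ℕ) : (G1 n : ℚ) = bessel n 1 := by
  rw [G1, bessel, ← Finset.Ico_add_one_right_eq_Icc, Finset.sum_Ico_eq_sum_range,
    show 2 * n + 1 - n = n + 1 by omega, Nat.cast_sum]
  refine sum_congr rfl fun i hi => ?_
  have h := E_one_add_mul_eq_factorial (Nat.lt_succ_iff.1 (mem_range.1 hi))
  rw [one_pow, mul_one, eq_div_iff (by positivity), ← h]
  push_cast
  ring
end

section
/- For n ≥ 3: 2(n-2)·G_2(n) = n(9n²-27n+17)·G_2(n-1) + (12n²-30n+13)·G_2(n-2) + 5(n-1)·G_2(n-3), with G_2(0)=1, G_2(1)=3, G_2(2)=31. -/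
/-- `G₂ n = Σ_{k=n}^{3n} E₂(n,k)`. -/
noncomputable def G2 (n : ℕ) : ℕ := ∑ k ∈ Finset.Icc n (3 * n), E 2 n k

/-
Removing the block that contains a fixed element shows that the number `S(n, k)` of partitions of
a `k`-set into `n` blocks of size at most `σ + 1` satisfies
`S(n + 1, k + 1) = ∑_{j ≤ σ} C(k, j) S(n, k - j)`.
For `σ = 2` the numbers `t(n, k) = 2ⁿ S(n, k)` satisfy a first-order recurrence in `n` with integer
coefficients and a three-term recurrence in `k`. Creative telescoping yields an explicit
`W(n, k)`, a combination of the `t(n, k - i)`, such that the claimed recurrence operator in `n`,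
applied to `t(·, k)`, equals `W(n, k + 1) - W(n, k)`. Summing over `k`, the boundary values of `W`
vanish, and since `∑ₖ t(n, k) = 2ⁿ G₂(n)` the recurrence for `G₂` follows.
-/

open Finset

theorem Finset.sum_powerset_filter_card_le_apply_card {β M : Type*} [AddCommMonoid M]
    (s : Finset β) (σ : ℕ) (f : ℕ → M) :
    ∑ t ∈ s.powerset with #t ≤ σ, f #t = ∑ j ∈ range (σ + 1), (#s).choose j • f j := by
  rw [← sum_fiberwise_of_maps_to (g := card) (t := range (σ + 1))
    (fun t ht => mem_range_succ_iff.2 (mem_filter.1 ht).2)]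
  refine sum_congr rfl fun j hj => ?_
  rw [← card_powersetCard, ← sum_const, filter_filter]
  refine sum_congr ?_ fun t ht => by rw [(mem_powersetCard.1 ht).2]
  have := mem_range_succ_iff.1 hj
  ext t
  simp only [mem_filter, mem_powerset, mem_powersetCard]
  grind

namespace Finpartition

variable {α : Type*} [GeneralizedBooleanAlgebra α] [DecidableEq α] {a b : α}

theorem avoid_parts_of_mem (P : Finpartition a) (hb : b ∈ P.parts) :
    (P.avoid b).parts = P.parts.erase b := by
  ext c
  rw [mem_avoid, mem_erase]
  constructor
  · rintro ⟨d, hd, hdb, rfl⟩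
    have hne : d ≠ b := by rintro rfl; exact hdb le_rfl
    have hdisj : Disjoint d b := P.disjoint hd hb hne
    rw [hdisj.sdiff_eq_left]
    exact ⟨hne, hd⟩
  · rintro ⟨hcb, hc⟩
    have hdisj : Disjoint c b := P.disjoint hc hb hcb
    exact ⟨c, hc, fun hle => P.ne_bot hc (hdisj.eq_bot_of_le hle), hdisj.sdiff_eq_left⟩

end Finpartition

def restrictedStirling (σ : ℕ) : ℕ → ℕ → ℕ
  | 0, 0 => 1
  | 0, _ + 1 => 0
  | _ + 1, 0 => 0
  | n + 1, k + 1 => ∑ j ∈ range (σ + 1), k.choose j * restrictedStirling σ n (k - j)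

theorem restrictedStirling_eq_zero_of_lt {σ n k : ℕ} (h : k < n) :
    restrictedStirling σ n k = 0 := by
  induction n generalizing k with
  | zero => omega
  | succ n ih =>
    cases k with
    | zero => rfl
    | succ k => exact sum_eq_zero fun j _ => by rw [ih (by omega), mul_zero]

theorem restrictedStirling_eq_zero_of_gt {σ n k : ℕ} (h : (σ + 1) * n < k) :
    restrictedStirling σ n k = 0 := by
  induction n generalizing k with
  | zero => obtain ⟨k, rfl⟩ := Nat.exists_eq_add_one.2 h; rfl
  | succ n ih =>
    obtain ⟨k, rfl⟩ := Nat.exists_eq_add_one.2 (Nat.zero_lt_of_lt h)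
    rw [Nat.mul_succ] at h
    exact sum_eq_zero fun j hj => by rw [ih (by have := mem_range.1 hj; omega), mul_zero]

theorem restrictedStirling_two_succ_succ (n k : ℕ) :
    restrictedStirling 2 (n + 1) (k + 1) = restrictedStirling 2 n k
      + k * restrictedStirling 2 n (k - 1) + k.choose 2 * restrictedStirling 2 n (k - 2) := by
  simp [restrictedStirling, sum_range_succ]

section Counting

variable {α : Type*} [DecidableEq α]

def boundedPartitions (σ n : ℕ) (s : Finset α) : Finset (Finpartition s) :=
  {P | #P.parts = n ∧ ∀ b ∈ P.parts, #b ≤ σ + 1}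

@[simp]
theorem mem_boundedPartitions {σ n : ℕ} {s : Finset α} {P : Finpartition s} :
    P ∈ boundedPartitions σ n s ↔ #P.parts = n ∧ ∀ b ∈ P.parts, #b ≤ σ + 1 := by
  simp [boundedPartitions]

theorem card_boundedPartitions_filter_part_eq {σ n : ℕ} {s b : Finset α} {a : α}
    (hbs : b ⊆ s) (hab : a ∈ b) (hbσ : #b ≤ σ + 1) :
    #{P ∈ boundedPartitions σ (n + 1) s | P.part a = b} = #(boundedPartitions σ n (s \ b)) := by
  have hb : b ≠ ⊥ := ne_empty_of_mem hab
  have hbQ (Q : Finpartition (s \ b)) : b ∉ Q.parts := fun h =>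
    (mem_sdiff.1 (Q.le h hab)).2 hab
  refine card_nbij' (fun P => P.avoid b)
    (fun Q => Q.extend hb sdiff_disjoint (sdiff_sup_cancel hbs)) ?_ ?_ ?_ ?_
  · intro P hP
    simp only [coe_filter, mem_boundedPartitions, Set.mem_ofPred_eq, mem_coe] at hP ⊢
    obtain ⟨⟨hcard, hsize⟩, rfl⟩ := hP
    have hpart := P.part_mem.2 (hbs hab)
    rw [P.avoid_parts_of_mem hpart, card_erase_of_mem hpart, hcard]
    exact ⟨rfl, fun c hc => hsize c (mem_of_mem_erase hc)⟩
  · intro Q hQ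
    simp only [coe_filter, mem_boundedPartitions, Set.mem_ofPred_eq, mem_coe,
      Finpartition.extend_parts, card_insert_of_notMem (hbQ Q), forall_mem_insert] at hQ ⊢
    exact ⟨⟨by rw [hQ.1], hbσ, hQ.2⟩,
      Finpartition.part_eq_of_mem _ (by simp) hab⟩
  · intro P hP
    simp only [coe_filter, Set.mem_ofPred_eq] at hP
    have hpart : b ∈ P.parts := hP.2 ▸ P.part_mem.2 (hbs hab)
    ext : 1
    rw [Finpartition.extend_parts, P.avoid_parts_of_mem hpart, insert_erase hpart]
  · intro Q _
    ext : 1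
    rw [Finpartition.avoid_parts_of_mem _ (by simp), Finpartition.extend_parts,
      erase_insert (hbQ Q)]

theorem card_boundedPartitions (σ n : ℕ) (s : Finset α) :
    #(boundedPartitions σ n s) = restrictedStirling σ n #s := by
  induction s using Finset.strongInduction generalizing n with
  | H s ih =>
  rcases s.eq_empty_or_nonempty with rfl | ⟨a, ha⟩
  · have hparts (P : Finpartition (∅ : Finset α)) : P.parts = ∅ :=
      P.parts_eq_empty_iff.2 rfl
    cases n with
    | zero =>
      simp only [boundedPartitions, hparts, card_empty, notMem_empty, IsEmpty.forall_iff,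
        implies_true, and_self, filter_true, card_univ, restrictedStirling]
      exact Fintype.card_eq_one_iff.2 ⟨⊥, fun P => Finpartition.ext (by rw [hparts, hparts])⟩
    | succ n => simp [boundedPartitions, hparts, restrictedStirling]
  obtain ⟨m, hm⟩ : ∃ m, #s = m + 1 := Nat.exists_eq_add_one.2 (card_pos.2 ⟨a, ha⟩)
  cases n with
  | zero =>
    rw [hm, restrictedStirling, card_eq_zero, eq_empty_iff_forall_notMem]
    intro P hP
    rw [mem_boundedPartitions, card_eq_zero, P.parts_eq_empty_iff] at hP
    simp [hP.1] at ha
  | succ n =>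
    have hfiber (c : Finset α) (hc : c ∈ (s.erase a).powerset.filter (#· ≤ σ)) :
        #{P ∈ boundedPartitions σ (n + 1) s | (P.part a).erase a = c}
          = restrictedStirling σ n (m - #c) := by
      obtain ⟨hcs, hcσ⟩ := mem_filter.1 hc
      have hac : a ∉ c := fun h => (mem_erase.1 (mem_powerset.1 hcs h)).1 rfl
      have hbs : insert a c ⊆ s :=
        insert_subset ha ((mem_powerset.1 hcs).trans (erase_subset _ _))
      rw [filter_congr fun P _ => erase_eq_iff_eq_insert (P.mem_part_self.2 ha) hac,
        card_boundedPartitions_filter_part_eq hbs (mem_insert_self a c)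
          (by rw [card_insert_of_notMem hac]; omega),
        ih _ (sdiff_ssubset hbs (insert_nonempty a c)), card_sdiff_of_subset hbs,
        card_insert_of_notMem hac, hm, Nat.add_sub_add_right]
    have hmaps : ∀ P ∈ boundedPartitions σ (n + 1) s,
        (P.part a).erase a ∈ (s.erase a).powerset.filter (#· ≤ σ) := by
      intro P hP
      have hsize := (mem_boundedPartitions.1 hP).2 _ (P.part_mem.2 ha)
      rw [mem_filter, mem_powerset, card_erase_of_mem (P.mem_part_self.2 ha)]
      exact ⟨erase_subset_erase a (P.part_subset a), by omega⟩
    rw [card_eq_sum_card_fiberwise hmaps, sum_congr rfl hfiber,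
      sum_powerset_filter_card_le_apply_card (f := fun j => restrictedStirling σ n (m - j)),
      card_erase_of_mem ha, hm, restrictedStirling]
    simp only [smul_eq_mul, Nat.add_sub_cancel]

end Counting

theorem E_eq_restrictedStirling (σ n k : ℕ) : E σ n k = restrictedStirling σ n k := by
  rw [E, Nat.card_eq_fintype_card, Fintype.card_subtype]
  convert card_boundedPartitions σ n (univ : Finset (Fin k))
  · ext P
    rw [mem_boundedPartitions, mem_filter_univ]
  · rw [card_fin]

theorem G2_eq_sum_range (n : ℕ) : G2 n = ∑ k ∈ range (3 * n + 1), restrictedStirling 2 n k := by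
  rw [G2, sum_congr rfl fun k _ => E_eq_restrictedStirling 2 n k]
  refine sum_subset (fun k hk => ?_) fun k hk hk' => restrictedStirling_eq_zero_of_lt ?_
  · rw [mem_Icc] at hk; rw [mem_range]; omega
  · rw [mem_Icc] at hk'; rw [mem_range] at hk; omega

-- The factor `2ⁿ` clears the denominator of `C(k, 2)` in the recurrence, and the extension by zero
-- to negative `k` lets the recurrences below hold for every `k` without case splits.
def scaledStirling (n : ℕ) : ℤ → ℤ
  | (k : ℕ) => 2 ^ n * restrictedStirling 2 n k
  | Int.negSucc _ => 0

theorem scaledStirling_natCast (n k : ℕ) :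
    scaledStirling n k = 2 ^ n * restrictedStirling 2 n k :=
  rfl

theorem scaledStirling_eq_zero_of_lt {n : ℕ} {k : ℤ} (h : k < n) : scaledStirling n k = 0 := by
  match k with
  | (k : ℕ) =>
    rw [scaledStirling_natCast, restrictedStirling_eq_zero_of_lt (by omega), Nat.cast_zero,
      mul_zero]
  | Int.negSucc _ => rfl

theorem scaledStirling_eq_zero_of_gt {n : ℕ} {k : ℤ} (h : 3 * n < k) : scaledStirling n k = 0 := by
  lift k to ℕ using by omega
  rw [scaledStirling_natCast, restrictedStirling_eq_zero_of_gt (by omega), Nat.cast_zero, mul_zero]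

theorem scaledStirling_succ (n : ℕ) (k : ℤ) :
    scaledStirling (n + 1) k = 2 * scaledStirling n (k - 1)
      + 2 * (k - 1) * scaledStirling n (k - 2) + (k - 1) * (k - 2) * scaledStirling n (k - 3) := by
  obtain hk | rfl | rfl | ⟨j, rfl⟩ : k ≤ 0 ∨ k = 1 ∨ k = 2 ∨ ∃ j : ℕ, k = j + 3 := by
    by_cases hk : k < 3
    · omega
    · exact Or.inr <| Or.inr <| Or.inr ⟨(k - 3).toNat, by omega⟩
  · have hneg {i : ℤ} (hi : i < 0) : scaledStirling n i = 0 :=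
      scaledStirling_eq_zero_of_lt (by omega)
    rw [scaledStirling_eq_zero_of_lt (by omega), hneg (by omega), hneg (by omega), hneg (by omega)]
    ring
  · have := restrictedStirling_two_succ_succ n 0
    simp_all [scaledStirling, pow_succ]
    ring
  · have := restrictedStirling_two_succ_succ n 1
    simp_all [scaledStirling, pow_succ]
    ring
  · have hrec := restrictedStirling_two_succ_succ n (j + 2)
    rw [show (j : ℤ) + 3 = ((j + 3 : ℕ) : ℤ) by push_cast; ring, scaledStirling_natCast, hrec]
    simp only [show ((j + 3 : ℕ) : ℤ) - 1 = ((j + 2 : ℕ) : ℤ) by push_cast; ring,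
      show ((j + 3 : ℕ) : ℤ) - 2 = ((j + 1 : ℕ) : ℤ) by push_cast; ring,
      show ((j + 3 : ℕ) : ℤ) - 3 = ((j : ℕ) : ℤ) by push_cast; ring, scaledStirling_natCast,
      Nat.add_sub_cancel]
    have : ((j + 2).choose 2 : ℤ) * 2 = (j + 2) * (j + 1) := by
      norm_cast
      rw [← Nat.add_one_mul_choose_eq, Nat.choose_one_right]
    push_cast
    linear_combination 2 ^ n * (restrictedStirling 2 n j : ℤ) * this

theorem mul_scaledStirling_zero (k : ℤ) : k * scaledStirling 0 k = 0 := by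
  rcases lt_trichotomy k 0 with hk | rfl | hk
  · rw [scaledStirling_eq_zero_of_lt (by omega), mul_zero]
  · rw [zero_mul]
  · rw [scaledStirling_eq_zero_of_gt (by omega), mul_zero]

-- Coefficientwise form of `f (fᵐ)' = m f' fᵐ` for `f = x + x²/2 + x³/6`, the exponential
-- generating function of a single block.
theorem scaledStirling_recurrence_k (m : ℕ) (k : ℤ) :
    (6 * k - 6 * m) * scaledStirling m k
      + (3 * k * (k - 1) - 6 * m * k) * scaledStirling m (k - 1)
      + (k * (k - 1) * (k - 2) - 3 * m * k * (k - 1)) * scaledStirling m (k - 2) = 0 := by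
  induction m generalizing k with
  | zero =>
    push_cast
    linear_combination 6 * mul_scaledStirling_zero k + 3 * k * mul_scaledStirling_zero (k - 1)
      + k * (k - 1) * mul_scaledStirling_zero (k - 2)
  | succ m ih =>
    push_cast
    linear_combination (norm := ring_nf)
      (6 * k - 6 * (m + 1)) * scaledStirling_succ m k
      + (3 * k * (k - 1) - 6 * (m + 1) * k) * scaledStirling_succ m (k - 1)
      + (k * (k - 1) * (k - 2) - 3 * (m + 1) * k * (k - 1)) * scaledStirling_succ m (k - 2)
      + 2 * ih (k - 1) + 2 * k * ih (k - 2) + (k ^ 2 - k) * ih (k - 3)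

theorem sum_range_scaledStirling {n K : ℕ} (hK : 3 * n < K) :
    ∑ k ∈ range K, scaledStirling n k = 2 ^ n * G2 n := by
  calc ∑ k ∈ range K, scaledStirling n k = ∑ k ∈ range (3 * n + 1), scaledStirling n k :=
        (sum_subset (range_subset_range.2 hK) fun k _ hk =>
          scaledStirling_eq_zero_of_gt (by rw [mem_range] at hk; omega)).symm
    _ = 2 ^ n * G2 n := by simp [G2_eq_sum_range, scaledStirling_natCast, mul_sum]

-- Found by creative telescoping, together with the multipliers in the proof of
-- `certificate_add_one_sub`.
def certificate (m : ℕ) (y : ℤ) : ℤ :=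
  (-80 - 40 * m) * scaledStirling m (y - 1) +
  (-328 + m * (-376 - 96 * m)) * scaledStirling m (y - 2) +
  ((-240 + m * (-488 + m * (-336 - 72 * m)))
    + y * (-248 + m * (-336 - 96 * m))) * scaledStirling m (y - 3) +
  ((1320 + m * (2776 + m * (1632 + 288 * m)))
    + y * ((-444 + m * (-1064 + m * (-720 - 144 * m)))
    + y * (-124 + m * (-168 - 48 * m)))) * scaledStirling m (y - 4) +
  ((-5440 + m * (-9800 + m * (-5040 - 792 * m)))
    + y * ((4748 + m * (8728 + m * (4560 + 720 * m)))
    + y * (-940 + m * (-1736 + m * (-912 - 144 * m))))) * scaledStirling m (y - 5) +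
  ((3984 + m * (8008 + m * (4608 + 864 * m)))
    + y * ((-7952 + m * (-15352 + m * (-8520 - 1476 * m)))
    + y * ((3416 + m * (6568 + m * (3624 + 612 * m)))
    + y * (-408 + m * (-784 + m * (-432 - 72 * m)))))) * scaledStirling m (y - 6) +
  ((-5992 + m * (-7960 + m * (-2256 - 216 * m)))
    + y * ((8920 + m * (14392 + m * (6264 + 972 * m)))
    + y * ((-5410 + m * (-9684 + m * (-4908 - 810 * m)))
    + y * ((1288 + m * (2416 + m * (1296 + 216 * m)))
    + y * (-102 + m * (-196 + m * (-108 - 18 * m))))))) * scaledStirling m (y - 7) +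
  ((-11360 + m * (-24296 + m * (-14832 - 2232 * m)))
    + y * ((12924 + m * (30704 + m * (20400 + 3312 * m)))
    + y * ((-5738 + m * (-13960 + m * (-9444 - 1566 * m)))
    + y * ((1048 + m * (2552 + m * (1728 + 288 * m)))
    + y * (-66 + m * (-160 + m * (-108 - 18 * m))))))) * scaledStirling m (y - 8) +
  ((-52576 + m * (-93112 + m * (-46512 - 7416 * m)))
    + y * ((55096 + m * (94208 + m * (44904 + 7380 * m)))
    + y * ((-22178 + m * (-35476 + m * (-15276 - 2538 * m)))
    + y * ((4172 + m * (6052 + m * (2160 + 360 * m)))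
    + y * ((-366 + m * (-460 + m * (-108 - 18 * m)))
    + y * (12 + 12 * m)))))) * scaledStirling m (y - 9) +
  ((-89280 + m * (-165960 + m * (-90288 - 16200 * m)))
    + y * ((73388 + m * (138464 + m * (75588 + 13140 * m)))
    + y * ((-17186 + m * (-35944 + m * (-21648 - 3690 * m)))
    + y * ((154 + m * (2386 + m * (2568 + 432 * m)))
    + y * ((432 + m * (338 + m * (-108 - 18 * m)))
    + y * ((-54 - 54 * m)
    + y * (2 + 2 * m))))))) * scaledStirling m (y - 10) +
  ((-285120 + m * (-556920 + m * (-308880 - 48600 * m)))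
    + y * ((131652 + m * (288392 + m * (178068 + 28080 * m)))
    + y * ((-10514 + m * (-43510 + m * (-37518 - 5922 * m)))
    + y * ((-3900 + m * (-896 + m * (3420 + 540 * m)))
    + y * ((912 + m * (812 + m * (-114 - 18 * m)))
    + y * ((-72 - 72 * m)
    + y * (2 + 2 * m))))))) * scaledStirling m (y - 11)

theorem certificate_add_one_sub (m : ℕ) (k : ℤ) :
    certificate m (k + 1) - certificate m k
      = 2 * (m + 1) * scaledStirling (m + 3) k
        - 2 * (m + 3) * (9 * m ^ 2 + 27 * m + 17) * scaledStirling (m + 2) k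
        - 4 * (12 * m ^ 2 + 42 * m + 31) * scaledStirling (m + 1) k
        - 40 * (m + 2) * scaledStirling m k := by
  simp only [certificate]
  linear_combination (norm := ring_nf)
      -(2 + 2 * m) * scaledStirling_succ (m + 2) k
    - (-102 - 196 * m - 108 * m ^ 2 - 18 * m ^ 3) * scaledStirling_succ (m + 1) k
    - (4 + 4 * m) * scaledStirling_succ (m + 1) (k - 1)
    - (-4 - 4 * m + 4 * k + 4 * m * k) * scaledStirling_succ (m + 1) (k - 2)
    - (4 + 4 * m - 6 * k - 6 * m * k + 2 * k ^ 2 + 2 * m * k ^ 2)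
      * scaledStirling_succ (m + 1) (k - 3)
    - (-124 - 168 * m - 48 * m ^ 2) * scaledStirling_succ m k
    - (-204 - 392 * m - 216 * m ^ 2 - 36 * m ^ 3) * scaledStirling_succ m (k - 1)
    - (212 + 400 * m + 216 * m ^ 2 + 36 * m ^ 3 - 204 * k - 392 * m * k - 216 * m ^ 2 * k
        - 36 * m ^ 3 * k)
      * scaledStirling_succ m (k - 2)
    - (-228 - 416 * m - 216 * m ^ 2 - 36 * m ^ 3 + 322 * k + 604 * m * k + 324 * m ^ 2 * k
        + 54 * m ^ 3 * k - 102 * k ^ 2 - 196 * m * k ^ 2 - 108 * m ^ 2 * k ^ 2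
        - 18 * m ^ 3 * k ^ 2)
      * scaledStirling_succ m (k - 3)
    - (56 + 56 * m - 64 * k - 64 * m * k + 16 * k ^ 2 + 16 * m * k ^ 2)
      * scaledStirling_succ m (k - 4)
    - (-80 - 80 * m + 132 * k + 132 * m * k - 60 * k ^ 2 - 60 * m * k ^ 2 + 8 * k ^ 3
        + 8 * m * k ^ 3)
      * scaledStirling_succ m (k - 5)
    - (80 + 80 * m - 156 * k - 156 * m * k + 98 * k ^ 2 + 98 * m * k ^ 2 - 24 * k ^ 3
        - 24 * m * k ^ 3 + 2 * k ^ 4 + 2 * m * k ^ 4)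
      * scaledStirling_succ m (k - 6)
    - (288 + 484 * m + 180 * m ^ 2 - 46 * k - 116 * m * k - 66 * m ^ 2 * k - 12 * k ^ 2
        - 6 * m * k ^ 2 + 6 * m ^ 2 * k ^ 2 + 2 * k ^ 3 + 2 * m * k ^ 3)
      * scaledStirling_recurrence_k m (k - 9)

theorem certificate_zero (m : ℕ) : certificate m 0 = 0 := by
  simp (disch := omega) only [certificate, scaledStirling_eq_zero_of_lt]
  ring

theorem certificate_three_mul_add_twelve (m : ℕ) : certificate m (3 * m + 12) = 0 := by
  simp (disch := omega) only [certificate, scaledStirling_eq_zero_of_gt]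
  ring

theorem G2_recurrence_mul_two_pow (m : ℕ) :
    2 * (m + 1) * (2 ^ (m + 3) * G2 (m + 3))
      - 2 * (m + 3) * (9 * m ^ 2 + 27 * m + 17) * (2 ^ (m + 2) * G2 (m + 2))
      - 4 * (12 * m ^ 2 + 42 * m + 31) * (2 ^ (m + 1) * G2 (m + 1))
      - 40 * (m + 2) * (2 ^ m * G2 m) = (0 : ℤ) := by
  have htel := Finset.sum_range_sub (fun k : ℕ => certificate m k) (3 * m + 12)
  simp only [Nat.cast_add, Nat.cast_one, certificate_add_one_sub, sum_sub_distrib, ← mul_sum]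
    at htel
  rw [sum_range_scaledStirling (by omega), sum_range_scaledStirling (by omega),
    sum_range_scaledStirling (by omega), sum_range_scaledStirling (by omega)] at htel
  push_cast at htel
  rw [htel, certificate_three_mul_add_twelve, certificate_zero, sub_zero]

theorem stmt_17 :
    G2 0 = 1 ∧ G2 1 = 3 ∧ G2 2 = 31 ∧
      ∀ n : ℕ, 3 ≤ n →
        2 * ((n : ℤ) - 2) * G2 n =
          (n : ℤ) * (9 * (n : ℤ) ^ 2 - 27 * n + 17) * G2 (n - 1)
          + (12 * (n : ℤ) ^ 2 - 30 * n + 13) * G2 (n - 2)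
          + 5 * ((n : ℤ) - 1) * G2 (n - 3) := by
  refine ⟨by rw [G2_eq_sum_range]; decide, by rw [G2_eq_sum_range]; decide,
    by rw [G2_eq_sum_range]; decide, fun n hn => ?_⟩
  obtain ⟨m, rfl⟩ : ∃ m, n = m + 3 := ⟨n - 3, by omega⟩
  simp only [Nat.add_sub_cancel, show m + 3 - 1 = m + 2 by omega, show m + 3 - 2 = m + 1 by omega]
  apply mul_left_cancel₀ (pow_ne_zero (m + 3) (two_ne_zero : (2 : ℤ) ≠ 0))
  push_cast
  linear_combination G2_recurrence_mul_two_pow m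
end

section
/- The number of possible scenarios of the gift exchange game with n gifts and steal limit σ, where the order in which gifts are drawn from the pool is fixed as 1,2,...,n, equals Σ_{k=n-1}^{(σ+1)(n-1)} S_2^{(σ+1)}(k, n-1): the scenarios are in bijection with sequences of integers from {1,...,n} beginning with 1, ending with the unique occurrence of n, in which each i ∈ {1,...,n-1} appears between 1 and σ+1 times and the first occurrence of i comes after the first occurrence of i-1; and these sequences are counted by the stated sum of restricted Stirling numbers. -/
/-- A valid play-out ("scenario") of the gift exchange game with `n` gifts, steal limit `σ`,
and the gifts taken from the pool in the order `1,2,…,n`, encoded as the sequence of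
gifts chosen at each action: it begins with `1`, ends with the unique occurrence of `n`,
each gift `i ∈ {1,…,n-1}` is chosen between `1` and `σ+1` times, and the first occurrence
of `i` comes after the first occurrence of `i-1`. -/
def ValidSeq (σ n : ℕ) : Set (List ℕ) :=
  {l | (∀ x ∈ l, 1 ≤ x ∧ x ≤ n) ∧
       l.head? = some 1 ∧
       l.getLast? = some n ∧
       l.count n = 1 ∧
       (∀ i, 1 ≤ i → i ≤ n - 1 → 1 ≤ l.count i ∧ l.count i ≤ σ + 1) ∧
       (∀ i, 2 ≤ i → i ≤ n → l.idxOf (i - 1) < l.idxOf i)}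

/-!
Deleting the final `n` from a scenario leaves a restricted growth string over `{1, …, n - 1}`
in which every letter occurs at most `σ + 1` times. A restricted growth string of length `k` is
the canonical labelling of a partition of `{1, …, k}`: number the blocks in increasing order of
their least elements and label each position by the number of its block. Under this bijection
the multiplicity of a letter is the size of its block, and the length `k` of the string lies
between `n - 1` and `(σ + 1)(n - 1)`.
-/

open Finset

namespace Finset

theorem card_image_eq_of_eq_iff {ι β γ : Type*} [DecidableEq β] [DecidableEq γ] {s : Finset ι}
    {f : ι → β} {g : ι → γ} (h : ∀ a ∈ s, ∀ b ∈ s, f a = f b ↔ g a = g b) :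
    #(s.image f) = #(s.image g) := by
  set pairs := s.image fun a => (f a, g a)
  have hf : s.image f = pairs.image Prod.fst := by rw [image_image]; rfl
  have hg : s.image g = pairs.image Prod.snd := by rw [image_image]; rfl
  have inj : Set.InjOn Prod.fst (pairs : Set (β × γ)) ∧
      Set.InjOn Prod.snd (pairs : Set (β × γ)) := by
    simp only [pairs, Set.InjOn, coe_image, Set.mem_image, mem_coe]
    constructor <;>
    · rintro _ ⟨a, ha, rfl⟩ _ ⟨b, hb, rfl⟩ hab
      simp_all
  rw [hf, hg, card_image_of_injOn inj.1, card_image_of_injOn inj.2]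

variable {α : Type*} [LinearOrder α]

def rank (s : Finset α) (x : α) : ℕ := #{y ∈ s | y < x}

theorem rank_lt_card {s : Finset α} {x : α} (hx : x ∈ s) : s.rank x < #s :=
  card_lt_card (filter_ssubset.2 ⟨x, hx, lt_irrefl x⟩)

theorem rank_strictMonoOn (s : Finset α) : StrictMonoOn s.rank s := fun x hx _ _ hxy =>
  card_lt_card ⟨monotone_filter_right _ fun _ _ h => h.trans hxy,
    fun hsub => lt_irrefl x (mem_filter.1 (hsub (mem_filter.2 ⟨hx, hxy⟩))).2⟩

end Finset

namespace Finpartition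

section Part

variable {α : Type*} [DecidableEq α] {s : Finset α}

theorem parts_eq_image_part (P : Finpartition s) : P.parts = s.image P.part := by
  ext t
  refine ⟨fun ht => ?_, fun ht => ?_⟩
  · obtain ⟨a, ha, rfl⟩ := P.part_surjOn ht
    exact mem_image_of_mem _ ha
  · obtain ⟨a, ha, rfl⟩ := mem_image.1 ht
    exact P.part_mem.2 ha

theorem ext_part {P Q : Finpartition s} (h : ∀ a ∈ s, P.part a = Q.part a) : P = Q :=
  Finpartition.ext (by rw [parts_eq_image_part, parts_eq_image_part, image_congr h])

end Part

section Ker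

variable {α β : Type*} [DecidableEq α] [Fintype α] [DecidableEq β]

def ker (f : α → β) : Finpartition (univ : Finset α) :=
  letI : DecidableRel (Setoid.ker f) := fun a b => decEq (f a) (f b)
  ofSetoid (Setoid.ker f)

theorem mem_part_ker {f : α → β} {a b : α} : b ∈ (ker f).part a ↔ f a = f b :=
  mem_part_ofSetoid_iff_rel

theorem part_ker (f : α → β) (a : α) : (ker f).part a = ({b | f b = f a} : Finset α) := by
  ext b
  simp [mem_part_ker, eq_comm]

theorem part_eq_part_ker_iff {f : α → β} {a b : α} :
    (ker f).part a = (ker f).part b ↔ f a = f b := by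
  rw [← (ker f).mem_part_iff_part_eq_part (mem_univ a) (mem_univ b), mem_part_ker, eq_comm]

theorem card_parts_ker (f : α → β) : #(ker f).parts = #(univ.image f) := by
  rw [parts_eq_image_part]
  exact card_image_eq_of_eq_iff fun _ _ _ _ => part_eq_part_ker_iff

theorem forall_card_parts_ker_le_iff {f : α → β} {s : ℕ} :
    (∀ t ∈ (ker f).parts, #t ≤ s) ↔ ∀ a, #{b | f b = f a} ≤ s := by
  simp [parts_eq_image_part, part_ker]

end Ker

section Label

variable {α : Type*} [LinearOrder α] [Fintype α] (P : Finpartition (univ : Finset α))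

def leader (a : α) : α := (P.part a).min' (P.part_nonempty.2 (mem_univ a))

def leaders : Finset α := univ.image P.leader

def label (a : α) : ℕ := P.leaders.rank (P.leader a) + 1

variable {P}

theorem leader_mem_part (a : α) : P.leader a ∈ P.part a := min'_mem _ _

theorem leader_le (a : α) : P.leader a ≤ a := min'_le _ _ (P.mem_part (mem_univ a))

theorem leader_eq_leader_iff {a b : α} : P.leader a = P.leader b ↔ P.part a = P.part b := by
  refine ⟨fun h => ?_, fun h => by simp only [leader, h]⟩
  rw [← P.part_eq_of_mem (P.part_mem.2 (mem_univ a)) (leader_mem_part a), h,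
    P.part_eq_of_mem (P.part_mem.2 (mem_univ b)) (leader_mem_part b)]

theorem leader_leader (a : α) : P.leader (P.leader a) = P.leader a :=
  leader_eq_leader_iff.2 (P.part_eq_of_mem (P.part_mem.2 (mem_univ a)) (leader_mem_part a))

theorem leader_mem_leaders (a : α) : P.leader a ∈ P.leaders := mem_image_of_mem _ (mem_univ a)

theorem card_leaders : #P.leaders = #P.parts := by
  rw [leaders, P.parts_eq_image_part]
  exact card_image_eq_of_eq_iff fun _ _ _ _ => leader_eq_leader_iff

theorem label_leader (a : α) : P.label (P.leader a) = P.label a := by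
  simp only [label, leader_leader]

theorem label_eq_label_iff {a b : α} : P.label a = P.label b ↔ P.part a = P.part b := by
  rw [label, label, Nat.add_right_cancel_iff,
    P.leaders.rank_strictMonoOn.injOn.eq_iff (leader_mem_leaders a) (leader_mem_leaders b),
    leader_eq_leader_iff]

theorem label_lt_label_iff {a b : α} : P.label a < P.label b ↔ P.leader a < P.leader b := by
  rw [label, label, Nat.add_lt_add_iff_right,
    P.leaders.rank_strictMonoOn.lt_iff_lt (leader_mem_leaders a) (leader_mem_leaders b)]

theorem image_label : univ.image P.label = Icc 1 #P.parts := by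
  have hcard : #(univ.image P.label) = #P.parts := by
    rw [P.parts_eq_image_part]
    exact card_image_eq_of_eq_iff fun _ _ _ _ => label_eq_label_iff
  refine eq_of_subset_of_card_le (fun i hi => ?_) (by simp [hcard])
  obtain ⟨a, -, rfl⟩ := mem_image.1 hi
  have := card_leaders (P := P) ▸ rank_lt_card (leader_mem_leaders (P := P) a)
  simp only [label, mem_Icc]
  omega

theorem ker_label : ker P.label = P :=
  ext_part fun a _ => by
    ext b
    rw [mem_part_ker, label_eq_label_iff, P.mem_part_iff_part_eq_part (mem_univ b) (mem_univ a),
      eq_comm]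

end Label

end Finpartition

section RestrictedGrowth

open Finpartition

variable {α : Type*} [LinearOrder α] [Fintype α]

structure IsRestrictedGrowth (m : ℕ) (f : α → ℕ) : Prop where
  image_eq : univ.image f = Icc 1 m
  exists_lt_add_one_eq : ∀ a, 2 ≤ f a → ∃ b < a, f b + 1 = f a

theorem IsRestrictedGrowth.mem_Icc {m : ℕ} {f : α → ℕ} (hf : IsRestrictedGrowth m f)
    (a : α) : f a ∈ Icc 1 m :=
  hf.image_eq ▸ mem_image_of_mem f (mem_univ a)

theorem Finpartition.isRestrictedGrowth_label (P : Finpartition (univ : Finset α)) :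
    IsRestrictedGrowth #P.parts P.label := by
  refine ⟨image_label, fun a ha => ?_⟩
  have hmem : P.label a - 1 ∈ univ.image P.label := by
    have := mem_Icc.1 (image_label (P := P) ▸ mem_image_of_mem P.label (mem_univ a))
    rw [image_label, mem_Icc]
    omega
  obtain ⟨b, -, hb⟩ := mem_image.1 hmem
  refine ⟨P.leader b, (label_lt_label_iff.1 (by omega)).trans_le (leader_le a), ?_⟩
  rw [label_leader]
  omega

theorem apply_leader_ker (f : α → ℕ) (a : α) : f ((ker f).leader a) = f a :=
  (mem_part_ker.1 (leader_mem_part a)).symm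

variable {m : ℕ} {f : α → ℕ}

theorem leader_ker_lt_leader_ker (hf : IsRestrictedGrowth m f) {a b : α} (hab : f b < f a) :
    (ker f).leader b < (ker f).leader a := by
  induction hfa : f a using Nat.strong_induction_on generalizing a with
  | _ n ih =>
    subst hfa
    have hb := mem_Icc.1 (hf.mem_Icc b)
    obtain ⟨c, hc, hcf⟩ := hf.exists_lt_add_one_eq ((ker f).leader a)
      (by rw [apply_leader_ker f]; omega)
    rw [apply_leader_ker f] at hcf
    have hbc : (ker f).leader b ≤ (ker f).leader c := by
      rcases (show f b ≤ f c by omega).eq_or_lt with hbc | hbc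
      · exact (leader_eq_leader_iff.2 (part_eq_part_ker_iff.2 hbc)).le
      · exact (ih (f c) (by omega) hbc rfl).le
    exact hbc.trans_lt ((leader_le c).trans_lt hc)

theorem leader_ker_lt_leader_ker_iff (hf : IsRestrictedGrowth m f) {a b : α} :
    (ker f).leader b < (ker f).leader a ↔ f b < f a := by
  refine ⟨fun h => ?_, leader_ker_lt_leader_ker hf⟩
  rcases lt_trichotomy (f b) (f a) with hlt | heq | hgt
  · exact hlt
  · exact absurd (leader_eq_leader_iff.2 (part_eq_part_ker_iff.2 heq)) h.ne
  · exact absurd (leader_ker_lt_leader_ker hf hgt) h.not_gt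

theorem label_ker (hf : IsRestrictedGrowth m f) : (ker f).label = f := by
  funext a
  have hfa := mem_Icc.1 (hf.mem_Icc a)
  have hrank : (ker f).leaders.rank ((ker f).leader a) = #(Ico 1 (f a)) := calc
    _ = #(({b | f b < f a} : Finset α).image (ker f).leader) := by
      rw [rank, leaders, filter_image]
      simp only [leader_ker_lt_leader_ker_iff hf]
    _ = #(({b | f b < f a} : Finset α).image f) :=
      card_image_eq_of_eq_iff fun _ _ _ _ => leader_eq_leader_iff.trans part_eq_part_ker_iff
    _ = #(Ico 1 (f a)) := by
      rw [← filter_image (p := (· < f a)), hf.image_eq]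
      congr 1
      ext i
      simp only [mem_filter, mem_Icc, mem_Ico]
      omega
  rw [label, hrank, Nat.card_Ico]
  omega

def restrictedGrowthEquiv (m : ℕ) :
    {f : α → ℕ // IsRestrictedGrowth m f} ≃
      {P : Finpartition (univ : Finset α) // #P.parts = m} where
  toFun f := ⟨ker f.1, by simp [card_parts_ker, f.2.image_eq]⟩
  invFun P := ⟨P.1.label, by simpa only [P.2] using P.1.isRestrictedGrowth_label⟩
  left_inv f := Subtype.ext (label_ker f.2)
  right_inv P := Subtype.ext ker_label

def restrictedGrowthEquivOfCardFiberLe (m s : ℕ) :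
    {f : α → ℕ // IsRestrictedGrowth m f ∧ ∀ a, #{b | f b = f a} ≤ s} ≃
      {P : Finpartition (univ : Finset α) // #P.parts = m ∧ ∀ t ∈ P.parts, #t ≤ s} :=
  (Equiv.subtypeSubtypeEquivSubtypeInter _ _).symm.trans <|
    ((restrictedGrowthEquiv m).subtypeEquiv fun _ => forall_card_parts_ker_le_iff.symm).trans
      (Equiv.subtypeSubtypeEquivSubtypeInter _ _)

end RestrictedGrowth

namespace List

theorem count_append_singleton_of_ne {α : Type*} [BEq α] [LawfulBEq α] {l : List α} {a b : α}
    (h : b ≠ a) : (l ++ [b]).count a = l.count a := by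
  simp [count_append, h]

theorem idxOf_le_of_getElem_eq {α : Type*} [BEq α] [LawfulBEq α] {l : List α} {a : α} {j : ℕ}
    (hj : j < l.length) (h : l[j] = a) : l.idxOf a ≤ j := by
  by_contra hlt
  have := not_of_lt_findIdx (not_le.1 hlt)
  simp_all

theorem count_ofFn {α : Type*} [DecidableEq α] {k : ℕ} (f : Fin k → α) (a : α) :
    (ofFn f).count a = #{i | f i = a} := by
  rw [← Multiset.coe_count, ← Fin.univ_val_map, Multiset.count_map]
  simp only [card, filter_val, eq_comm]

theorem idxOf_ofFn_le {α : Type*} [BEq α] [LawfulBEq α] {k : ℕ} (f : Fin k → α) (i : Fin k) :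
    (ofFn f).idxOf (f i) ≤ i :=
  idxOf_le_of_getElem_eq (by simp) (by simp)

theorem exists_idxOf_ofFn_eq {α : Type*} [BEq α] [LawfulBEq α] {k : ℕ} {f : Fin k → α} {a : α}
    (h : a ∈ ofFn f) : ∃ i : Fin k, (ofFn f).idxOf a = i ∧ f i = a :=
  have hlt : (ofFn f).idxOf a < (ofFn f).length := idxOf_lt_length_iff.2 h
  ⟨⟨(ofFn f).idxOf a, by simpa using hlt⟩, rfl, by
    rw [← List.getElem_ofFn hlt]
    exact getElem_idxOf hlt⟩

end List

namespace GiftExchange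

def GrowthSeq (σ m : ℕ) : Set (List ℕ) :=
  {l | (∀ x ∈ l, 1 ≤ x ∧ x ≤ m) ∧
       (∀ i, 1 ≤ i → i ≤ m → 1 ≤ l.count i ∧ l.count i ≤ σ + 1) ∧
       (∀ i, 2 ≤ i → i ≤ m → l.idxOf (i - 1) < l.idxOf i)}

variable {σ m k : ℕ}

theorem forall_idxOf_ofFn_lt_iff {f : Fin k → ℕ}
    (hmem : ∀ i, 1 ≤ i → i ≤ m → i ∈ List.ofFn f) (hle : ∀ a, f a ≤ m) :
    (∀ i, 2 ≤ i → i ≤ m → (List.ofFn f).idxOf (i - 1) < (List.ofFn f).idxOf i) ↔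
      ∀ a, 2 ≤ f a → ∃ b < a, f b + 1 = f a := by
  constructor
  · intro h a ha
    have hfa := hle a
    obtain ⟨b, hb, hfb⟩ := List.exists_idxOf_ofFn_eq (hmem (f a - 1) (by omega) (by omega))
    have hlt := h (f a) ha hfa
    have hle' := List.idxOf_ofFn_le f a
    exact ⟨b, Fin.lt_def.2 (by omega), by omega⟩
  · intro h i hi₂ him
    obtain ⟨a, ha, hfa⟩ := List.exists_idxOf_ofFn_eq (hmem i (by omega) him)
    obtain ⟨b, hba, hfb⟩ := h a (by omega)
    have := List.idxOf_ofFn_le f b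
    rw [show f b = i - 1 by omega] at this
    rw [ha]
    exact this.trans_lt hba

theorem ofFn_mem_growthSeq_iff {f : Fin k → ℕ} :
    List.ofFn f ∈ GrowthSeq σ m ↔
      IsRestrictedGrowth m f ∧ ∀ a, #{b | f b = f a} ≤ σ + 1 := by
  constructor
  · rintro ⟨hval, hcount, hidx⟩
    have hmem i (h₁ : 1 ≤ i) (h₂ : i ≤ m) : i ∈ List.ofFn f :=
      List.count_pos_iff.1 (hcount i h₁ h₂).1
    have hval' a : 1 ≤ f a ∧ f a ≤ m := hval _ (List.mem_ofFn.2 ⟨a, rfl⟩)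
    refine ⟨⟨?_, (forall_idxOf_ofFn_lt_iff hmem fun a => (hval' a).2).1 hidx⟩, fun a => ?_⟩
    · ext i
      simp only [mem_image, mem_univ, true_and, mem_Icc]
      exact ⟨fun ⟨a, ha⟩ => ha ▸ hval' a,
        fun ⟨h₁, h₂⟩ => List.mem_ofFn.1 (hmem i h₁ h₂)⟩
    · rw [← List.count_ofFn]
      exact (hcount _ (hval' a).1 (hval' a).2).2
  · rintro ⟨hf, hbound⟩
    have hmem i (h₁ : 1 ≤ i) (h₂ : i ≤ m) : i ∈ List.ofFn f := by
      obtain ⟨a, -, ha⟩ := mem_image.1 (hf.image_eq ▸ mem_Icc.2 ⟨h₁, h₂⟩)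
      exact List.mem_ofFn.2 ⟨a, ha⟩
    have hle a : f a ≤ m := (mem_Icc.1 (hf.mem_Icc a)).2
    refine ⟨fun x hx => ?_, fun i h₁ h₂ => ?_,
      (forall_idxOf_ofFn_lt_iff hmem hle).2 hf.exists_lt_add_one_eq⟩
    · obtain ⟨a, rfl⟩ := List.mem_ofFn.1 hx
      exact mem_Icc.1 (hf.mem_Icc a)
    · obtain ⟨a, rfl⟩ := List.mem_ofFn.1 (hmem i h₁ h₂)
      rw [List.count_ofFn]
      exact ⟨card_pos.2 ⟨a, by simp⟩, hbound a⟩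

theorem length_mem_Icc {l : List ℕ} (hl : l ∈ GrowthSeq σ m) :
    l.length ∈ Icc m ((σ + 1) * m) := by
  obtain ⟨hval, hcount, -⟩ := hl
  have hsum : ∑ i ∈ Icc 1 m, l.count i = l.length := by
    simpa using Multiset.sum_count_eq_card (s := Icc 1 m) (m := (l : Multiset ℕ))
      fun a ha => mem_Icc.2 (hval a ha)
  rw [← hsum, mem_Icc]
  constructor
  · simpa using card_nsmul_le_sum (Icc 1 m) (l.count ·) 1
      fun i hi => (hcount i (mem_Icc.1 hi).1 (mem_Icc.1 hi).2).1
  · simpa [mul_comm] using sum_le_card_nsmul (Icc 1 m) (l.count ·) (σ + 1)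
      fun i hi => (hcount i (mem_Icc.1 hi).1 (mem_Icc.1 hi).2).2

theorem head?_eq_some_one {l : List ℕ} (hl : l ∈ GrowthSeq σ m) (hm : 1 ≤ m) :
    l.head? = some 1 := by
  obtain ⟨hval, hcount, hidx⟩ := hl
  obtain ⟨x, t, rfl⟩ :=
    List.exists_cons_of_ne_nil (List.ne_nil_of_mem (List.count_pos_iff.1 (hcount 1 le_rfl hm).1))
  have hx := hval x List.mem_cons_self
  have : ¬2 ≤ x := fun h => by simpa using hidx x h hx.2
  simp only [List.head?_cons, Option.some.injEq]
  omega

theorem mem_growthSeq_of_append_mem_validSeq {n : ℕ} {l : List ℕ}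
    (h : l ++ [n] ∈ ValidSeq σ n) : l ∈ GrowthSeq σ (n - 1) := by
  obtain ⟨hval, -, -, hcn, hcount, hidx⟩ := h
  have hn_notMem : n ∉ l := by
    rw [List.count_append] at hcn
    exact List.count_eq_zero.1 (by simpa using hcn)
  have hcount' i (h₁ : 1 ≤ i) (h₂ : i ≤ n - 1) :
      1 ≤ l.count i ∧ l.count i ≤ σ + 1 := by
    rw [← List.count_append_singleton_of_ne (b := n) (by omega)]
    exact hcount i h₁ h₂
  have hmem i (h₁ : 1 ≤ i) (h₂ : i ≤ n - 1) : i ∈ l :=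
    List.count_pos_iff.1 (hcount' i h₁ h₂).1
  refine ⟨fun x hx => ?_, hcount', fun i h₁ h₂ => ?_⟩
  · have := hval x (List.mem_append_left _ hx)
    have : x ≠ n := fun h => hn_notMem (h ▸ hx)
    omega
  · have := hidx i h₁ (by omega)
    rwa [List.idxOf_append_of_mem (hmem (i - 1) (by omega) (by omega)),
      List.idxOf_append_of_mem (hmem i (by omega) h₂)] at this

theorem append_mem_validSeq {n : ℕ} (hn : 1 ≤ n) {l : List ℕ}
    (hl : l ∈ GrowthSeq σ (n - 1)) :
    l ++ [n] ∈ ValidSeq σ n := by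
  obtain ⟨hval, hcount, hidx⟩ := hl
  have hn_notMem : n ∉ l := fun h => by have := hval n h; omega
  have hmem i (h₁ : 1 ≤ i) (h₂ : i ≤ n - 1) : i ∈ l :=
    List.count_pos_iff.1 (hcount i h₁ h₂).1
  have hhead : (l ++ [n]).head? = some 1 := by
    rcases (show n = 1 ∨ 1 ≤ n - 1 by omega) with rfl | hn'
    · obtain rfl : l = [] := List.eq_nil_iff_forall_not_mem.2 fun x hx => by
        have := hval x hx; omega
      rfl
    · rw [List.head?_append, head?_eq_some_one ⟨hval, hcount, hidx⟩ hn']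
      rfl
  have hcount' i (h₁ : 1 ≤ i) (h₂ : i ≤ n - 1) :
      1 ≤ (l ++ [n]).count i ∧ (l ++ [n]).count i ≤ σ + 1 := by
    rw [List.count_append_singleton_of_ne (by omega)]
    exact hcount i h₁ h₂
  refine ⟨fun x hx => ?_, hhead, by simp, by simp [List.count_eq_zero.2 hn_notMem], hcount',
    fun i h₁ h₂ => ?_⟩
  · rcases List.mem_append.1 hx with hx | hx
    · have := hval x hx; omega
    · simp only [List.mem_singleton] at hx; omega
  · rw [List.idxOf_append_of_mem (hmem (i - 1) (by omega) (by omega))]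
    rcases (show i ≤ n - 1 ∨ i = n by omega) with hi | rfl
    · rw [List.idxOf_append_of_mem (hmem i (by omega) hi)]
      exact hidx i h₁ hi
    · rw [List.idxOf_append_of_notMem hn_notMem]
      simpa using List.idxOf_lt_length_iff.2 (hmem (i - 1) (by omega) le_rfl)

def validSeqEquivGrowthSeq {n : ℕ} (hn : 1 ≤ n) : ValidSeq σ n ≃ GrowthSeq σ (n - 1) where
  toFun l := ⟨l.1.dropLast, mem_growthSeq_of_append_mem_validSeq <| by
    rw [List.dropLast_append_getLast? n l.2.2.2.1]; exact l.2⟩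
  invFun l := ⟨l.1 ++ [n], append_mem_validSeq hn l.2⟩
  left_inv l := Subtype.ext (List.dropLast_append_getLast? n l.2.2.2.1)
  right_inv _ := Subtype.ext List.dropLast_concat

def growthSeqEquivSigma (σ m : ℕ) :
    GrowthSeq σ m ≃
      Σ k : Icc m ((σ + 1) * m), {v : List.Vector ℕ k // v.toList ∈ GrowthSeq σ m} where
  toFun l := ⟨⟨l.1.length, length_mem_Icc l.2⟩, ⟨l.1, rfl⟩, l.2⟩
  invFun x := ⟨x.2.1.toList, x.2.2⟩
  left_inv _ := rfl
  right_inv x := by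
    obtain ⟨⟨k, hk⟩, ⟨l, hlk⟩, hl⟩ := x
    obtain rfl : l.length = k := hlk
    rfl

def growthSeqVectorEquiv (σ m k : ℕ) :
    {v : List.Vector ℕ k // v.toList ∈ GrowthSeq σ m} ≃
      {P : Finpartition (univ : Finset (Fin k)) //
        #P.parts = m ∧ ∀ t ∈ P.parts, #t ≤ σ + 1} :=
  ((Equiv.vectorEquivFin ℕ k).subtypeEquiv fun v => by
    rw [← ofFn_mem_growthSeq_iff, ← List.Vector.toList_ofFn]
    simp [Equiv.vectorEquivFin]).trans
    (restrictedGrowthEquivOfCardFiberLe m (σ + 1))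

def validSeqEquivSigma {n : ℕ} (hn : 1 ≤ n) :
    ValidSeq σ n ≃ Σ k : Icc (n - 1) ((σ + 1) * (n - 1)),
      {P : Finpartition (univ : Finset (Fin k)) //
        #P.parts = n - 1 ∧ ∀ t ∈ P.parts, #t ≤ σ + 1} :=
  (validSeqEquivGrowthSeq hn).trans <| (growthSeqEquivSigma σ (n - 1)).trans <|
    Equiv.sigmaCongrRight fun k => growthSeqVectorEquiv σ (n - 1) k

end GiftExchange

theorem stmt_18 (σ n : ℕ) (hn : 1 ≤ n) :
    Nat.card (ValidSeq σ n) =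
      ∑ k ∈ Finset.Icc (n - 1) ((σ + 1) * (n - 1)), E σ (n - 1) k := by
  rw [Nat.card_congr (GiftExchange.validSeqEquivSigma hn), Nat.card_sigma]
  exact sum_coe_sort _ (E σ (n - 1))
end
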